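/- Let T : ℕ → ℤ, n ≥ m ≥ 1, and q, d positive integers. Let ψ(i, j) = (Σ_{k=i}^{j−1} T(k)·d^(j−1−k)) mod q. Then the final rolling hash value equals the direct hash of the last window: applying the update recurrence t_{s+1} = (d·(t_s − T(s)·d^(m−1)) + T(s+m)) mod q starting from t_0 = ψ(0, m) yields t_{n−m} = ψ(n−m, n). -/

import Mathlib

/-! Without reduction mod `q`, the window hash `H(i, j) = hornerSum T d i j` obeys the
rolling identity `H(s+1, s+1+m) = d · (H(s, s+m) - T(s) d^(m-1)) + T(s+m)` exactly (drop the leading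
digit, then one Horner step). The update is a polynomial in `t s`, so it respects congruence mod `q`;
by induction `t s = ψ(s, s+m)` for all `s`, and `s = n - m` is the claim. -/

open Finset

section HornerSum

variable {R : Type*} [CommRing R]

def hornerSum (f : ℕ → R) (d : R) (i j : ℕ) : R :=
  ∑ k ∈ Ico i j, f k * d ^ (j - 1 - k)

theorem hornerSum_succ_right (f : ℕ → R) (d : R) {i j : ℕ} (hij : i ≤ j) :
    hornerSum f d i (j + 1) = d * hornerSum f d i j + f j := by
  rw [hornerSum, sum_Ico_succ_top hij, hornerSum, mul_sum, Nat.add_sub_cancel, Nat.sub_self,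
    pow_zero, mul_one]
  congr 1
  refine sum_congr rfl fun k hk => ?_
  rw [mem_Ico] at hk
  rw [show j - k = (j - 1 - k) + 1 by omega, pow_succ]
  ring

theorem hornerSum_eq_add_succ_left (f : ℕ → R) (d : R) {i j : ℕ} (hij : i < j) :
    hornerSum f d i j = f i * d ^ (j - 1 - i) + hornerSum f d (i + 1) j :=
  sum_eq_sum_Ico_succ_bot hij _

theorem hornerSum_roll (f : ℕ → R) (d : R) (s : ℕ) {m : ℕ} (hm : 1 ≤ m) :
    hornerSum f d (s + 1) (s + 1 + m) =
      d * (hornerSum f d s (s + m) - f s * d ^ (m - 1)) + f (s + m) := by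
  rw [hornerSum_eq_add_succ_left f d (show s < s + m by omega),
    show s + m - 1 - s = m - 1 by omega, add_sub_cancel_left, show s + 1 + m = s + m + 1 by omega,
    hornerSum_succ_right f d (show s + 1 ≤ s + m by omega)]

end HornerSum

theorem final_hash_eq_general (T : ℕ → ℤ) (n m : ℕ) (hm : 1 ≤ m) (hmn : m ≤ n)
    (q d : ℤ)
    (ψ : ℕ → ℕ → ℤ)
    (hψ : ∀ i j, ψ i j = (∑ k ∈ Finset.Ico i j, T k * d ^ (j - 1 - k)) % q)
    (t : ℕ → ℤ)
    (ht0 : t 0 = ψ 0 m)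
    (hts : ∀ s, t (s + 1) = (d * (t s - T s * d ^ (m - 1)) + T (s + m)) % q) :
    t (n - m) = ψ (n - m) n := by
  have hψ' : ∀ i j, ψ i j = hornerSum T d i j % q := hψ
  have invariant : ∀ s, t s = ψ s (s + m) := by
    intro s
    induction s with
    | zero => simpa using ht0
    | succ s ih =>
      rw [hts, ih, hψ', hψ', hornerSum_roll T d s hm]
      exact ((Int.mod_modEq _ q).sub_right _ |>.mul_left d).add_right _
  simpa [Nat.sub_add_cancel hmn] using invariant (n - m)

theorem final_hash_eq (T : ℕ → ℤ) (n m : ℕ) (hm : 1 ≤ m) (hmn : m ≤ n)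
    (q d : ℤ) (hq : 0 < q) (hd : 0 < d)
    (ψ : ℕ → ℕ → ℤ)
    (hψ : ∀ i j, ψ i j = (∑ k ∈ Finset.Ico i j, T k * d ^ (j - 1 - k)) % q)
    (t : ℕ → ℤ)
    (ht0 : t 0 = ψ 0 m)
    (hts : ∀ s, t (s + 1) = (d * (t s - T s * d ^ (m - 1)) + T (s + m)) % q) :
    t (n - m) = ψ (n - m) n :=
  final_hash_eq_general T n m hm hmn q d ψ hψ t ht0 hts
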